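/- Let n ≥ 2 and let ω ∈ S^{n−1} have ω_j > 0 for all 1 ≤ j ≤ n. Let ℓ = (ℓ_σ)_{σ∈Σ(n)} ∈ ℤ^Σ be such that ω belongs to the cell S_ℓ of the dissection associated with the standard basis, i.e. 2^{−(ℓ_σ+1)} ≤ ω_k/ω_j < 2^{−ℓ_σ} for every σ = (j,k) ∈ Σ. Then {ξ ∈ ℝ^n : |ξ·ω| < (1/n)·max_{1≤j≤n} |ω_j ξ_j|} ⊆ ∪_{σ∈Σ} Ψ_{σ,ℓ_σ}, where Ψ_{σ,ℓ} := Ψ_{σ,ℓ,n}. -/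

import Mathlib

open MeasureTheory Real Set
open scoped ENNReal NNReal FourierTransform RealInnerProductSpace

noncomputable section

/-- Euclidean space `ℝ^n`. -/
abbrev Euc (n : ℕ) : Type := EuclideanSpace ℝ (Fin n)

namespace Paper

variable {n : ℕ}

/-- The Fourier multiplier operator with symbol `m`, acting on functions on `ℝ^n`. -/
def fmul (m : Euc n → ℂ) (f : Euc n → ℂ) : Euc n → ℂ :=
  𝓕⁻ fun ξ => m ξ * 𝓕 f ξ

/-- The directional Hilbert transform along `ω`: the Fourier multiplier
with symbol `sign (ξ ⬝ ω)`. -/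
def dirHilbert (ω : Euc n) (f : Euc n → ℂ) : Euc n → ℂ :=
  fmul (fun ξ => ((Real.sign ⟪ξ, ω⟫ : ℝ) : ℂ)) f

/-- The `L^p(w dx)` norm of an `ℝ≥0∞`-valued function. -/
def lpW (p : ℝ) (w : Euc n → ℝ) (g : Euc n → ℝ≥0∞) : ℝ≥0∞ :=
  (∫⁻ x, g x ^ p * ENNReal.ofReal (w x)) ^ (1 / p)

/-- Pointwise `‖·‖` of a complex valued function, as an `ℝ≥0∞`-valued function. -/
def nn (f : Euc n → ℂ) : Euc n → ℝ≥0∞ := fun x => (‖f x‖₊ : ℝ≥0∞)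

/-- The directional maximal operator along the set of directions `Ω`. -/
def dirMaxE (Ω : Set (Euc n)) (g : Euc n → ℝ≥0∞) : Euc n → ℝ≥0∞ := fun x =>
  ⨆ (ω : Euc n) (_ : ω ∈ Ω) (ε : ℝ) (_ : 0 < ε),
    (ENNReal.ofReal (2 * ε))⁻¹ * ∫⁻ t in Ioo (-ε) ε, g (x + t • ω)

/-- A weight: continuous, strictly positive, locally integrable. -/
def IsWeight (w : Euc n → ℝ) : Prop :=
  Continuous w ∧ (∀ x, 0 < w x) ∧ LocallyIntegrable w

/-- Average of a weight over the segment `{x + tω : |t| < η}`. -/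
def segAvg (w : Euc n → ℝ) (x ω : Euc n) (η : ℝ) : ℝ≥0∞ :=
  (ENNReal.ofReal (2 * η))⁻¹ * ∫⁻ t in Ioo (-η) η, ENNReal.ofReal (w (x + t • ω))

/-- The directional Muckenhoupt `A_p^Ω` constant, `1 < p < ∞`. -/
def ApC (Ω : Set (Euc n)) (p : ℝ) (w : Euc n → ℝ) : ℝ≥0∞ :=
  ⨆ (ω : Euc n) (_ : ω ∈ Ω) (x : Euc n) (η : ℝ) (_ : 0 < η),
    segAvg w x ω η * segAvg (fun y => w y ^ (-1 / (p - 1))) x ω η ^ (p - 1)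

/-- The directional `A_1^Ω` constant. -/
def A1C (Ω : Set (Euc n)) (w : Euc n → ℝ) : ℝ≥0∞ :=
  ⨆ x : Euc n, dirMaxE Ω (fun y => ENNReal.ofReal (w y)) x / ENNReal.ofReal (w x)

/-- The operator norm of the directional maximal operator `M_Ω` on `L^p(w)`. -/
def maxOpNorm (Ω : Set (Euc n)) (p : ℝ) (w : Euc n → ℝ) : ℝ≥0∞ :=
  sInf {A : ℝ≥0∞ | ∀ g : Euc n → ℝ≥0∞, Measurable g →
    lpW p w (dirMaxE Ω g) ≤ A * lpW p w g}

/-- The unit sphere `S^{n-1}`. -/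
def unitSphere (n : ℕ) : Set (Euc n) := {ω | ‖ω‖ = 1}

/-- The sector `S_{σ,ℓ}` of a dissection determined by the pair of directions `(u, v)`. -/
def sectorB (u v : Euc n) (ℓ : ℤ) : Set (Euc n) :=
  {ω | ‖ω‖ = 1 ∧ (2 : ℝ) ^ (-(ℓ + 1)) ≤ |⟪ω, v⟫| / |⟪ω, u⟫| ∧
    |⟪ω, v⟫| / |⟪ω, u⟫| < (2 : ℝ) ^ (-ℓ)}

/-- The sector `S_{σ,∞}` of a dissection determined by the pair of directions `(u, v)`. -/
def sectorInfB (u v : Euc n) : Set (Euc n) :=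
  {ω | ‖ω‖ = 1 ∧ (⟪ω, u⟫ = 0 ∨ ⟪ω, v⟫ = 0)}

/-- Lacunary sets of directions of finite order. -/
def IsLacunary (n : ℕ) : ℕ → Set (Euc n) → Prop
  | 0, Ω => Ω.Subsingleton
  | L + 1, Ω => ∃ (d : ℕ) (b : Fin d → Euc n),
      Orthonormal ℝ b ∧
      Submodule.span ℝ (Set.range b) = Submodule.span ℝ Ω ∧
      ∀ j k : Fin d, j < k →
        (∀ ℓ : ℤ, IsLacunary n L (Ω ∩ sectorB (b j) (b k) ℓ)) ∧
        IsLacunary n L (Ω ∩ sectorInfB (b j) (b k))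

/-- Lacunary sets of directions of finite order, with all basis vectors of the
witnessing dissections contained in the set. -/
def IsLacunaryB (n : ℕ) : ℕ → Set (Euc n) → Prop
  | 0, Ω => Ω.Subsingleton
  | L + 1, Ω => ∃ (d : ℕ) (b : Fin d → Euc n),
      Orthonormal ℝ b ∧ Set.range b ⊆ Ω ∧
      Submodule.span ℝ (Set.range b) = Submodule.span ℝ Ω ∧
      ∀ j k : Fin d, j < k →
        (∀ ℓ : ℤ, IsLacunaryB n L (Ω ∩ sectorB (b j) (b k) ℓ)) ∧
        IsLacunaryB n L (Ω ∩ sectorInfB (b j) (b k))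

/-- The index set `Σ(n) = {(j,k) : 1 ≤ j < k ≤ n}`. -/
abbrev SigmaIdx (n : ℕ) : Type := {σ : Fin n × Fin n // σ.1 < σ.2}

/-- The sector `S_{σ,ℓ}` relative to the standard coordinate basis. -/
def sectorStd (n : ℕ) (σ : SigmaIdx n) (ℓ : ℤ) : Set (Euc n) :=
  {ω | ‖ω‖ = 1 ∧ (2 : ℝ) ^ (-(ℓ + 1)) ≤ |ω σ.1.2| / |ω σ.1.1| ∧
    |ω σ.1.2| / |ω σ.1.1| < (2 : ℝ) ^ (-ℓ)}

/-- The cell `S_ℓ` relative to the standard coordinate basis. -/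
def cellStd (n : ℕ) (ℓ : SigmaIdx n → ℤ) : Set (Euc n) :=
  ⋂ σ : SigmaIdx n, sectorStd n σ (ℓ σ)

/-- The set of standard basis directions `{e_1, …, e_n}`. -/
def stdDirs (n : ℕ) : Set (Euc n) :=
  Set.range fun i : Fin n => (EuclideanSpace.single i (1 : ℝ) : Euc n)

/-- The strong Muckenhoupt `A_p^*` constant. -/
def ApStar (n : ℕ) (p : ℝ) (w : Euc n → ℝ) : ℝ≥0∞ := ApC (stdDirs n) p w

/-- The property characterizing the function `φ⁺`. -/
def IsPhiPlus (n : ℕ) (φ : ℝ → ℝ) : Prop :=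
  ContDiff ℝ (⊤ : ℕ∞) φ ∧ (∀ x, φ x ∈ Icc (0 : ℝ) 1) ∧
  (∀ x ≤ -((n : ℝ) + 1), φ x = 0) ∧ (∀ x, -(n : ℝ) ≤ x → φ x = 1)

/-- The property characterizing the function `φ⁻`. -/
def IsPhiMinus (n : ℕ) (φ : ℝ → ℝ) : Prop :=
  ContDiff ℝ (⊤ : ℕ∞) φ ∧ (∀ x, φ x ∈ Icc (0 : ℝ) 1) ∧
  (∀ x ≤ -(1 / (2 * (n : ℝ))), φ x = 1) ∧ (∀ x, -(1 / (2 * ((n : ℝ) + 1))) ≤ x → φ x = 0)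

/-- The symbol argument `2^ℓ ξ_{σ(1)} / ξ_{σ(2)}`. -/
def symArg (σ : SigmaIdx n) (ℓ : ℤ) (ξ : Euc n) : ℝ :=
  (2 : ℝ) ^ ℓ * (ξ σ.1.1 / ξ σ.1.2)

/-- The symbol of `K^{ε}_{σ,ℓ}` with `ε ∈ {+,−}`; `true` encodes `+`. -/
def Ksym (φp φm : ℝ → ℝ) (ε : Bool) (σ : SigmaIdx n) (ℓ : ℤ) (ξ : Euc n) : ℂ :=
  (((if ε then φp else φm) (symArg σ ℓ ξ) : ℝ) : ℂ)

/-- The symbol of `K^{∘}_{σ,ℓ}`. -/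
def KcircSym (φp φm : ℝ → ℝ) (σ : SigmaIdx n) (ℓ : ℤ) (ξ : Euc n) : ℂ :=
  ((φp (symArg σ ℓ ξ) * φm (symArg σ ℓ ξ) : ℝ) : ℂ)

/-- The operator `K^{ε}_{U,ℓ}`, `ε ∈ {+,−}^U` (composition of the commuting
multiplier operators, i.e. the multiplier with the product symbol). -/
def KUeps (φp φm : ℝ → ℝ) (U : Finset (SigmaIdx n)) (ε : SigmaIdx n → Bool)
    (ℓ : SigmaIdx n → ℤ) : (Euc n → ℂ) → Euc n → ℂ :=
  fmul fun ξ => ∏ σ ∈ U, Ksym φp φm (ε σ) σ (ℓ σ) ξ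

/-- The operator `K_{U,ℓ}` (all signs equal to `∘`). -/
def KUcirc (φp φm : ℝ → ℝ) (U : Finset (SigmaIdx n)) (ℓ : SigmaIdx n → ℤ) :
    (Euc n → ℂ) → Euc n → ℂ :=
  fmul fun ξ => ∏ σ ∈ U, KcircSym φp φm σ (ℓ σ) ξ

/-- The property characterizing the Littlewood–Paley function `p`. -/
def IsLPfun (pf : ℝ → ℝ) : Prop :=
  ContDiff ℝ (⊤ : ℕ∞) pf ∧ (∀ x, pf x ≠ 0 → 1 / 2 < |x| ∧ |x| < 2) ∧
  ∀ ξ : ℝ, ξ ≠ 0 → HasSum (fun t : ℤ => pf ((2 : ℝ) ^ (-(t : ℝ)) * ξ)) 1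

/-- The Littlewood–Paley projection `P_t^υ`. -/
def Pop (pf : ℝ → ℝ) (υ : Fin n) (t : ℝ) : (Euc n → ℂ) → Euc n → ℂ :=
  fmul fun ξ => ((pf ((2 : ℝ) ^ (-t) * ξ υ) : ℝ) : ℂ)

/-- Open axis-parallel rectangle. -/
def rect (a b : Fin n → ℝ) : Set (Euc n) := {y | ∀ i, y i ∈ Ioo (a i) (b i)}

/-- The strong maximal function. -/
def strongMaxE (g : Euc n → ℝ≥0∞) : Euc n → ℝ≥0∞ := fun x =>
  ⨆ (a : Fin n → ℝ) (b : Fin n → ℝ) (_ : x ∈ rect a b),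
    (∫⁻ y in rect a b, g y) / volume (rect a b)

/-- One of the `2^n` open coordinate orthants. -/
def orthant (n : ℕ) (s : Fin n → Bool) : Set (Euc n) :=
  {ξ | ∀ i, if s i then 0 < ξ i else ξ i < 0}

/-- The two-dimensional wedge `Ψ_{σ,ℓ,γ}`. -/
def wedge (n : ℕ) (σ : SigmaIdx n) (ℓ : ℤ) (γ : ℝ) : Set (Euc n) :=
  {ξ | ξ σ.1.2 ≠ 0 ∧ (2 : ℝ) ^ (-(ℓ + 1)) / γ ≤ -(ξ σ.1.1 / ξ σ.1.2) ∧
    -(ξ σ.1.1 / ξ σ.1.2) < γ * (2 : ℝ) ^ (-ℓ)}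

/-- The best constant of a sublinear operator `T` from `L^p(w)` (tested on Schwartz
functions) to `L^p(w)`. -/
def opNormW (p : ℝ) (w : Euc n → ℝ) (T : (Euc n → ℂ) → Euc n → ℝ≥0∞) : ℝ≥0∞ :=
  sInf {A : ℝ≥0∞ | ∀ f : SchwartzMap (Euc n) ℂ, lpW p w (T ⇑f) ≤ A * lpW p w (nn ⇑f)}

/-- Maximal directional Hilbert transform along a finite set of directions. -/
def maxHilbert (O : Finset (Euc n)) (f : Euc n → ℂ) : Euc n → ℝ≥0∞ := fun x =>
  ⨆ ω ∈ O, (‖dirHilbert ω f x‖₊ : ℝ≥0∞)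

/-- `Θ_N(Ω,w)`: the largest operator norm of `H_O` on `L²(w)` over `O ⊆ Ω` with `#O ≤ N`. -/
def ThetaN (N : ℕ) (Ω : Set (Euc n)) (w : Euc n → ℝ) : ℝ≥0∞ :=
  ⨆ (O : Finset (Euc n)) (_ : ↑O ⊆ Ω) (_ : O.card ≤ N),
    opNormW 2 w (maxHilbert O)

end Paper

open Paper

/-!
Put `a j = ω j * ξ j`, so that `⟪ξ, ω⟫ = ∑ j, a j`, and let `|a i₀|` be the largest `|a j|`.
If every `a q` of sign opposite to `a i₀` had `|a q| < |a i₀| / n`, then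
`a i₀ * ∑ j, a j ≥ |a i₀| ^ 2 - (n - 1) * |a i₀| ^ 2 / n = |a i₀| ^ 2 / n`,
contradicting `|⟪ξ, ω⟫| < |a i₀| / n`. Such a `q` is a coordinate where `a` changes sign with
`1 ≤ |a i₀| / |a q| ≤ n`, and `-(ξ j / ξ k) = (|a j| / |a k|) * (ω k / ω j)` places `ξ` in the
wedge of the pair `{i₀, q}`, with the factor `n` absorbing `|a j| / |a k|`.
-/

theorem exists_mul_neg_and_div_card_le_abs {ι : Type*} [Fintype ι] {a : ι → ℝ} {i₀ : ι}
    (hsum : |∑ i, a i| < |a i₀| / Fintype.card ι) :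
    ∃ q, a i₀ * a q < 0 ∧ |a i₀| / Fintype.card ι ≤ |a q| := by
  set M := |a i₀|
  set N : ℝ := (Fintype.card ι : ℝ)
  have hN : 0 < N := Nat.cast_pos.2 (Fintype.card_pos_iff.2 ⟨i₀⟩)
  have hM : 0 < M := (div_pos_iff_of_pos_right hN).1 ((abs_nonneg _).trans_lt hsum)
  by_contra! hsmall
  have hterm : ∀ q, 0 ≤ a i₀ * a q + M * M / N := by
    intro q
    rcases lt_or_ge (a i₀ * a q) 0 with hneg | hnonneg
    · have hprod : |a i₀ * a q| ≤ M * M / N := by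
        rw [abs_mul, mul_div_assoc]
        exact mul_le_mul_of_nonneg_left (hsmall q hneg).le hM.le
      linarith [neg_abs_le (a i₀ * a q)]
    · positivity
  have hlower : M * M + M * M / N ≤ a i₀ * ∑ q, a q + M * M := by
    have h := Finset.single_le_sum (fun q _ => hterm q) (Finset.mem_univ i₀)
    rw [Finset.sum_add_distrib, Finset.sum_const, Finset.card_univ, nsmul_eq_mul,
      ← Finset.mul_sum, mul_div_cancel₀ _ hN.ne', ← abs_mul_self, abs_mul] at h
    linarith
  have hupper : a i₀ * ∑ q, a q < M * M / N :=
    calc a i₀ * ∑ q, a q ≤ M * |∑ q, a q| := (le_abs_self _).trans (abs_mul _ _).le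
      _ < M * (M / N) := mul_lt_mul_of_pos_left hsum hM
      _ = M * M / N := by ring
  linarith

theorem neg_div_mem_Ico_of_mul_neg {x y u v γ A B : ℝ} (hu : 0 < u) (hv : 0 < v)
    (hopp : u * x * (v * y) < 0) (hxy : |u * x| ≤ γ * |v * y|) (hyx : |v * y| ≤ γ * |u * x|)
    (hA : A ≤ v / u) (hB : v / u < B) :
    -(x / y) ∈ Ico (A / γ) (γ * B) := by
  have hux : 0 < |u * x| := abs_pos.2 (left_ne_zero_of_mul hopp.ne)
  have hvy : 0 < |v * y| := abs_pos.2 (right_ne_zero_of_mul hopp.ne)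
  have hγ : 0 < γ := pos_of_mul_pos_left (hvy.trans_le hyx) hux.le
  have hratio : -(x / y) = |u * x| / |v * y| * (v / u) := by
    rw [← abs_div, abs_of_neg (div_neg_iff.2 (mul_neg_iff.1 hopp))]
    field_simp
  have hlow : 1 / γ ≤ |u * x| / |v * y| := by
    rw [div_le_div_iff₀ hγ hvy]; linarith
  have hhigh : |u * x| / |v * y| ≤ γ := (div_le_iff₀ hvy).2 hxy
  rw [hratio]
  constructor
  · calc A / γ = 1 / γ * A := by ring
      _ ≤ 1 / γ * (v / u) := by gcongr
      _ ≤ |u * x| / |v * y| * (v / u) := by gcongr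
  · calc |u * x| / |v * y| * (v / u) ≤ γ * (v / u) := by gcongr
      _ < γ * B := by gcongr

theorem mem_wedge_of_mul_neg {n : ℕ} {ω ξ : Euc n} {σ : SigmaIdx n} {ℓ : ℤ} {γ : ℝ}
    (hpos : ∀ j, 0 < ω j)
    (hcell : (2 : ℝ) ^ (-(ℓ + 1)) ≤ ω σ.1.2 / ω σ.1.1 ∧ ω σ.1.2 / ω σ.1.1 < (2 : ℝ) ^ (-ℓ))
    (hopp : ω σ.1.1 * ξ σ.1.1 * (ω σ.1.2 * ξ σ.1.2) < 0)
    (h12 : |ω σ.1.1 * ξ σ.1.1| ≤ γ * |ω σ.1.2 * ξ σ.1.2|)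
    (h21 : |ω σ.1.2 * ξ σ.1.2| ≤ γ * |ω σ.1.1 * ξ σ.1.1|) :
    ξ ∈ wedge n σ ℓ γ :=
  ⟨right_ne_zero_of_mul (right_ne_zero_of_mul hopp.ne),
    neg_div_mem_Ico_of_mul_neg (hpos _) (hpos _) hopp h12 h21 hcell.1 hcell.2⟩

theorem mem_iUnion_wedge_of_mul_neg {n : ℕ} {ω ξ : Euc n} {ℓ : SigmaIdx n → ℤ} {γ : ℝ}
    (hpos : ∀ j, 0 < ω j)
    (hcell : ∀ σ : SigmaIdx n,
      (2 : ℝ) ^ (-(ℓ σ + 1)) ≤ ω σ.1.2 / ω σ.1.1 ∧ ω σ.1.2 / ω σ.1.1 < (2 : ℝ) ^ (-(ℓ σ)))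
    {j k : Fin n} (hopp : ω j * ξ j * (ω k * ξ k) < 0)
    (hjk : |ω j * ξ j| ≤ γ * |ω k * ξ k|) (hkj : |ω k * ξ k| ≤ γ * |ω j * ξ j|) :
    ξ ∈ ⋃ σ : SigmaIdx n, wedge n σ (ℓ σ) γ := by
  have hne : j ≠ k := by
    rintro rfl
    exact (mul_self_nonneg _).not_gt hopp
  rcases hne.lt_or_gt with hlt | hgt
  · exact mem_iUnion.2 ⟨⟨(j, k), hlt⟩, mem_wedge_of_mul_neg hpos (hcell _) hopp hjk hkj⟩
  · exact mem_iUnion.2 ⟨⟨(k, j), hgt⟩,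
      mem_wedge_of_mul_neg hpos (hcell _) (by rwa [mul_comm]) hkj hjk⟩

theorem cone_subset_union_wedges_general (n : ℕ) (ω : Euc n)
    (hpos : ∀ j, 0 < ω j) (ℓ : SigmaIdx n → ℤ)
    (hcell : ∀ σ : SigmaIdx n,
      (2 : ℝ) ^ (-(ℓ σ + 1)) ≤ ω σ.1.2 / ω σ.1.1 ∧
        ω σ.1.2 / ω σ.1.1 < (2 : ℝ) ^ (-(ℓ σ))) :
    {ξ : Euc n | |⟪ξ, ω⟫| < (1 / (n : ℝ)) * ⨆ j : Fin n, |ω j * ξ j|} ⊆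
      ⋃ σ : SigmaIdx n, wedge n σ (ℓ σ) n := by
  intro ξ hξ
  rw [mem_ofPred_eq, one_div_mul_eq_div] at hξ
  cases isEmpty_or_nonempty (Fin n)
  · exact absurd hξ (by simp)
  obtain ⟨i₀, hi₀⟩ := exists_eq_ciSup_of_finite (f := fun j => |ω j * ξ j|)
  have hmax : ∀ j, |ω j * ξ j| ≤ |ω i₀ * ξ i₀| :=
    fun j => hi₀ ▸ le_ciSup (Finite.bddAbove_range fun j => |ω j * ξ j|) j
  have hinner : ⟪ξ, ω⟫ = ∑ j, ω j * ξ j := by simp [PiLp.inner_apply]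
  rw [← hi₀, hinner] at hξ
  obtain ⟨q, hopp, hq⟩ := exists_mul_neg_and_div_card_le_abs (a := fun j => ω j * ξ j) (i₀ := i₀)
    (by simpa using hξ)
  rw [Fintype.card_fin] at hq
  have hn : 0 < n := Fin.pos'
  exact mem_iUnion_wedge_of_mul_neg hpos hcell hopp ((div_le_iff₀' (Nat.cast_pos.2 hn)).1 hq)
    ((hmax q).trans (le_mul_of_one_le_left (abs_nonneg _) (Nat.one_le_cast.2 hn)))

/-- inclusion `eq:inclusion`.
If `ω` lies in the cell `S_ℓ` (and has positive coordinates), then the region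
`{ξ : |ξ·ω| < (1/n)·max_j |ω_j ξ_j|}` is covered by the wedges `Ψ_{σ,ℓ_σ} = Ψ_{σ,ℓ_σ,n}`. -/
theorem cone_subset_union_wedges (n : ℕ) (hn : 2 ≤ n) (ω : Euc n) (hω : ‖ω‖ = 1)
    (hpos : ∀ j, 0 < ω j) (ℓ : SigmaIdx n → ℤ)
    (hcell : ∀ σ : SigmaIdx n,
      (2 : ℝ) ^ (-(ℓ σ + 1)) ≤ ω σ.1.2 / ω σ.1.1 ∧
        ω σ.1.2 / ω σ.1.1 < (2 : ℝ) ^ (-(ℓ σ))) :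
    {ξ : Euc n | |⟪ξ, ω⟫| < (1 / (n : ℝ)) * ⨆ j : Fin n, |ω j * ξ j|} ⊆
      ⋃ σ : SigmaIdx n, wedge n σ (ℓ σ) n :=
  cone_subset_union_wedges_general n ω hpos ℓ hcell
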